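/- Let F_q be a finite field and n ≥ 1. Then every A ∈ GL(n, F_q) can be written A = S₁·S₂ where S₁ and S₂ are invertible symmetric n×n matrices over F_q. Equivalently, every element of GL(n, F_q) is strongly ι-real for the automorphism ι(g) = (gᵀ)⁻¹. -/

import Mathlib

/-!
Via `A`, the space `Fⁿ` becomes a torsion `F[X]`-module, hence a direct sum of cyclic modules
`F[X] ⧸ (q)`. Each of these carries the symmetric bilinear form `(a, b) ↦` (coefficient of
`X ^ (deg q - 1)` in `a * b mod q`), which is nondegenerate and for which multiplication by `X` is
self-adjoint. Their orthogonal sum yields an invertible symmetric `S` with `Aᵀ * S = S * A`, and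
then `A = S⁻¹ * (S * A)` is a product of two invertible symmetric matrices.
-/

open Matrix

noncomputable section

open Polynomial

universe u
variable {K : Type u} [Field K]

namespace AdjoinRoot

variable {q : K[X]} (hq : q.Monic)

def topCoeff : AdjoinRoot q →ₗ[K] K :=
  (lcoeff K (q.natDegree - 1)).comp (modByMonicHom hq)

theorem topCoeff_mk (a : K[X]) : topCoeff hq (mk q a) = (a %ₘ q).coeff (q.natDegree - 1) := rfl

theorem separatingLeft_mul_compr₂_topCoeff :
    ((LinearMap.mul K (AdjoinRoot q)).compr₂ (topCoeff hq)).SeparatingLeft := by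
  intro z hz
  induction z using AdjoinRoot.induction_on with | ih a => ?_
  rw [← mk_leftInverse hq (mk q a), modByMonicHom_mk] at hz ⊢
  have hr : (a %ₘ q).degree < q.degree := degree_modByMonic_lt _ hq
  generalize a %ₘ q = r at hr hz ⊢
  by_contra hr0
  replace hr0 : r ≠ 0 := by rintro rfl; exact hr0 (map_zero _)
  have hlt : r.natDegree < q.natDegree := natDegree_lt_natDegree hr0 hr
  -- multiplying by `X ^ k` moves the leading coefficient of `r` to `X ^ (deg q - 1)`, unreduced
  set k := q.natDegree - 1 - r.natDegree
  have hdeg : (r * X ^ k).natDegree = q.natDegree - 1 := by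
    rw [natDegree_mul_X_pow _ hr0]; omega
  have hred : r * X ^ k %ₘ q = r * X ^ k := by
    rw [modByMonic_eq_self_iff hq, degree_eq_natDegree (by simpa using hr0),
      degree_eq_natDegree hq.ne_zero, hdeg]
    exact_mod_cast (by omega : q.natDegree - 1 < q.natDegree)
  apply leadingCoeff_ne_zero.mpr hr0
  have := hz (mk q (X ^ k))
  rwa [LinearMap.compr₂_apply, LinearMap.mul_apply', ← map_mul, topCoeff_mk, hred, ← hdeg,
    coeff_natDegree, leadingCoeff_mul_X_pow] at this

end AdjoinRoot

theorem exists_separatingLeft_quotient_span_singleton {q : K[X]} (hq : q ≠ 0) :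
    ∃ ℓ : (K[X] ⧸ Ideal.span {q}) →ₗ[K] K, ((LinearMap.mul K _).compr₂ ℓ).SeparatingLeft := by
  have hunit : IsUnit (C q.leadingCoeff⁻¹) :=
    isUnit_C.mpr (isUnit_iff_ne_zero.mpr (inv_ne_zero (leadingCoeff_ne_zero.mpr hq)))
  rw [← Ideal.span_singleton_mul_right_unit hunit]
  exact ⟨_, AdjoinRoot.separatingLeft_mul_compr₂_topCoeff (monic_mul_leadingCoeff_inv hq)⟩

theorem separatingLeft_pi {ι : Type*} [Fintype ι] {R : ι → Type*} [∀ i, CommRing (R i)]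
    [∀ i, Algebra K (R i)] (ℓ : ∀ i, R i →ₗ[K] K)
    (hℓ : ∀ i, ((LinearMap.mul K (R i)).compr₂ (ℓ i)).SeparatingLeft) :
    ((LinearMap.mul K (∀ i, R i)).compr₂ (∑ i, (ℓ i).comp (LinearMap.proj i))).SeparatingLeft := by
  classical
  intro z hz
  funext i
  refine hℓ i (z i) fun y => ?_
  have h := hz (Pi.single i y)
  simp only [LinearMap.compr₂_apply, LinearMap.mul_apply', LinearMap.sum_apply,
    LinearMap.comp_apply, LinearMap.proj_apply, Pi.mul_apply] at h
  rwa [Finset.sum_eq_single i (fun j _ hj => by simp [Pi.single_eq_of_ne hj]) (by simp),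
    Pi.single_eq_same] at h

variable {V : Type*} [AddCommGroup V] [Module K V]

theorem Module.End.exists_isSymm_nondegenerate_isAdjointPair_of_linearEquiv
    {R S : Type*} [CommRing R] [Algebra K R] [CommSemiring S] [Algebra S R] {ℓ : R →ₗ[K] K}
    (hℓ : ((LinearMap.mul K R).compr₂ ℓ).SeparatingLeft) (f : Module.End K V) (e : V ≃ₗ[K] R)
    (s : S) (he : ∀ v, e (f v) = s • e v) :
    ∃ B : LinearMap.BilinForm K V, B.IsSymm ∧ B.Nondegenerate ∧ B.IsAdjointPair B f f := by
  let B : LinearMap.BilinForm K V :=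
    ((LinearMap.mul K R).compr₂ ℓ).compl₁₂ e.toLinearMap e.toLinearMap
  have hB : ∀ u v, B u v = ℓ (e u * e v) := fun _ _ => rfl
  have hsymm : B.IsSymm := ⟨fun u v => by rw [hB, hB, mul_comm]⟩
  refine ⟨B, hsymm, hsymm.isRefl.nondegenerate_iff_separatingLeft.mpr fun u hu => ?_,
    fun u v => ?_⟩
  · refine e.map_eq_zero_iff.mp (hℓ (e u) fun w => ?_)
    simpa [hB] using hu (e.symm w)
  · rw [hB, hB, he, he, smul_mul_assoc, mul_smul_comm]

theorem Module.End.exists_linearEquiv_pi_quotient [FiniteDimensional K V] (f : Module.End K V) :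
    ∃ (ι : Type u) (_ : Fintype ι) (q : ι → K[X]) (_ : ∀ i, q i ≠ 0)
      (e : V ≃ₗ[K] ∀ i, K[X] ⧸ Ideal.span {q i}), ∀ v, e (f v) = (X : K[X]) • e v := by
  obtain ⟨ι, _, p, hp, k, ⟨g⟩⟩ := Module.equiv_directSum_of_isTorsion
    (Module.AEval.isTorsion_of_finiteDimensional K V f)
  refine ⟨ι, inferInstance, fun i => p i ^ k i, fun i => pow_ne_zero _ (hp i).ne_zero,
    (Module.AEval'.of f).trans
      ((g.trans (DirectSum.linearEquivFunOnFintype _ _ _)).restrictScalars K), fun v => ?_⟩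
  simp only [LinearEquiv.trans_apply, LinearEquiv.restrictScalars_apply]
  rw [← Module.AEval'.X_smul_of, map_smul, map_smul]

theorem Module.End.exists_isSymm_nondegenerate_isAdjointPair [FiniteDimensional K V]
    (f : Module.End K V) :
    ∃ B : LinearMap.BilinForm K V, B.IsSymm ∧ B.Nondegenerate ∧ B.IsAdjointPair B f f := by
  obtain ⟨ι, _, q, hq, e, he⟩ := f.exists_linearEquiv_pi_quotient
  choose ℓ hℓ using fun i => exists_separatingLeft_quotient_span_singleton (hq i)
  exact exists_isSymm_nondegenerate_isAdjointPair_of_linearEquiv (separatingLeft_pi ℓ hℓ) f e X he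

theorem Matrix.exists_isSymm_det_ne_zero_transpose_mul_eq {n : Type*} [Fintype n] [DecidableEq n]
    (A : Matrix n n K) : ∃ S : Matrix n n K, S.IsSymm ∧ S.det ≠ 0 ∧ Aᵀ * S = S * A := by
  obtain ⟨B, hsymm, hnd, hadj⟩ := Module.End.exists_isSymm_nondegenerate_isAdjointPair (toLin' A)
  refine ⟨LinearMap.toMatrix₂' K B, B.isSymm_toMatrix'_iff_isSymm.mpr hsymm, ?_, ?_⟩
  · rwa [← LinearMap.nondegenerate_toLinearMap₂'_iff_det_ne_zero, toLinearMap₂'_toMatrix']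
  · show Matrix.IsAdjointPair _ _ A A
    rwa [← isAdjointPair_toLinearMap₂', toLinearMap₂'_toMatrix']

theorem GL_product_of_two_symmetric_general
    (F : Type) [Field F] (n : ℕ)
    (A : GL (Fin n) F) :
    ∃ S₁ S₂ : GL (Fin n) F,
      (↑S₁ : Matrix (Fin n) (Fin n) F)ᵀ = ↑S₁ ∧
      (↑S₂ : Matrix (Fin n) (Fin n) F)ᵀ = ↑S₂ ∧
      A = S₁ * S₂ := by
  obtain ⟨S, hS, hdet, hAS⟩ :=
    exists_isSymm_det_ne_zero_transpose_mul_eq (A : Matrix (Fin n) (Fin n) F)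
  let U : GL (Fin n) F := nonsingInvUnit S (isUnit_iff_ne_zero.mpr hdet)
  refine ⟨U⁻¹, U * A, ?_, ?_, (inv_mul_cancel_left U A).symm⟩
  · show S⁻¹ᵀ = S⁻¹
    rw [transpose_nonsing_inv, hS.eq]
  · show (S * (A : Matrix (Fin n) (Fin n) F))ᵀ = S * A
    rw [transpose_mul, hS.eq, hAS]

/-- Every invertible matrix over a finite field is a product of two invertible
symmetric matrices; equivalently, every element of `GL(n, F_q)` is strongly
`ι`-real for the automorphism `ι(g) = (gᵀ)⁻¹`. -/
theorem GL_product_of_two_symmetric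
    (F : Type) [Field F] [Fintype F] (n : ℕ) (hn : 1 ≤ n)
    (A : GL (Fin n) F) :
    ∃ S₁ S₂ : GL (Fin n) F,
      (↑S₁ : Matrix (Fin n) (Fin n) F)ᵀ = ↑S₁ ∧
      (↑S₂ : Matrix (Fin n) (Fin n) F)ᵀ = ↑S₂ ∧
      A = S₁ * S₂ :=
  GL_product_of_two_symmetric_general F n A
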